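/- arXiv:1205.2516 — 6 statements merged into one kernel-verified Lean document; each statement's English description precedes it below -/
import Mathlib

section
/- Let W, X, Y, Z be finite sets and suppose the square with maps f : W → X, g : W → Y, h : X → Z, k : Y → Z (kg = hf) is cartesian (a pullback, i.e. W ≅ {(x,y) : h(x) = k(y)} compatibly). Then for any commutative semiring R: T_g ∘ R_f = R_k ∘ T_h and N_g ∘ R_f = R_k ∘ N_h as maps (X → R) → (Y → R), where T_u(s)(b) = ∑_{a ∈ u⁻¹{b}} s(a), N_u(s)(b) = ∏_{a ∈ u⁻¹{b}} s(a), and R_u(s) = s ∘ u. -/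
open scoped Classical

/-- Additive transfer along `u`: `T_u(s)(b) = ∑_{a ∈ u⁻¹{b}} s(a)`. -/
noncomputable def Tfer {X Y R : Type*} [Fintype X] [CommSemiring R]
    (f : X → Y) (s : X → R) : Y → R :=
  fun y => ∑ x : X, if f x = y then s x else 0

/-- Multiplicative norm along `u`: `N_u(s)(b) = ∏_{a ∈ u⁻¹{b}} s(a)`. -/
noncomputable def Nfer {X Y R : Type*} [Fintype X] [CommSemiring R]
    (f : X → Y) (s : X → R) : Y → R :=
  fun y => ∏ x : X, if f x = y then s x else 1

/-- Restriction along `u`: `R_u(s) = s ∘ u`. -/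
def Rfer {X Y R : Type*} (f : X → Y) (r : Y → R) : X → R := r ∘ f

/-! In a cartesian square the fibre of `g` over `y` is identified, via `f`, with the fibre of
`h` over `k y`. Transfer and norm only see fibres, so both sides of each identity are the
same sum (product) reindexed along this bijection. -/

section Fibres

variable {X Y R : Type*} [Fintype X] [CommSemiring R]

theorem Tfer_apply_eq_sum_fiber (f : X → Y) (s : X → R) (y : Y) :
    Tfer f s y = ∑ x : {x // f x = y}, s x := by
  rw [Tfer, ← Finset.sum_filter, ← Finset.sum_subtype_eq_sum_filter, Finset.subtype_univ]

theorem Nfer_apply_eq_prod_fiber (f : X → Y) (s : X → R) (y : Y) :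
    Nfer f s y = ∏ x : {x // f x = y}, s x := by
  rw [Nfer, ← Finset.prod_filter, ← Finset.prod_subtype_eq_prod_filter, Finset.subtype_univ]

end Fibres

section Pullback

variable {W X Y Z : Type*} (f : W → X) (g : W → Y) (h : X → Z) (k : Y → Z)

noncomputable def fiberEquivOfPullback (hcomm : ∀ w : W, k (g w) = h (f w))
    (hpb : ∀ (x : X) (y : Y), h x = k y → ∃! w : W, f w = x ∧ g w = y) (y : Y) :
    {w // g w = y} ≃ {x // h x = k y} :=
  Equiv.ofBijective (fun w => ⟨f w, by rw [← hcomm, w.2]⟩) <| by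
    constructor
    · rintro ⟨w₁, hw₁⟩ ⟨w₂, hw₂⟩ hf
      have hf : f w₁ = f w₂ := congrArg Subtype.val hf
      obtain ⟨w, -, huniq⟩ := hpb (f w₁) y (by rw [← hcomm, hw₁])
      exact Subtype.ext ((huniq w₁ ⟨rfl, hw₁⟩).trans (huniq w₂ ⟨hf.symm, hw₂⟩).symm)
    · rintro ⟨x, hx⟩
      obtain ⟨w, ⟨hfw, hgw⟩, -⟩ := hpb x y hx
      exact ⟨⟨w, hgw⟩, Subtype.ext hfw⟩

variable [Fintype W] [Fintype X] {R : Type*} [CommSemiring R]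

theorem Tfer_Rfer_eq_Rfer_Tfer_of_fiberEquiv
    (e : ∀ y, {w // g w = y} ≃ {x // h x = k y}) (he : ∀ y w, (e y w : X) = f w)
    (s : X → R) : Tfer g (Rfer f s) = Rfer k (Tfer h s) := by
  funext y
  show Tfer g (Rfer f s) y = Tfer h s (k y)
  rw [Tfer_apply_eq_sum_fiber, Tfer_apply_eq_sum_fiber]
  exact Fintype.sum_equiv (e y) _ _ fun w => by rw [he]; rfl

theorem Nfer_Rfer_eq_Rfer_Nfer_of_fiberEquiv
    (e : ∀ y, {w // g w = y} ≃ {x // h x = k y}) (he : ∀ y w, (e y w : X) = f w)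
    (s : X → R) : Nfer g (Rfer f s) = Rfer k (Nfer h s) := by
  funext y
  show Nfer g (Rfer f s) y = Nfer h s (k y)
  rw [Nfer_apply_eq_prod_fiber, Nfer_apply_eq_prod_fiber]
  exact Fintype.prod_equiv (e y) _ _ fun w => by rw [he]; rfl

end Pullback

theorem mackey_base_change_general {W X Y Z R : Type*} [Fintype W] [Fintype X]
    [CommSemiring R]
    (f : W → X) (g : W → Y) (h : X → Z) (k : Y → Z)
    (hcomm : ∀ w : W, k (g w) = h (f w))
    (hpb : ∀ (x : X) (y : Y), h x = k y → ∃! w : W, f w = x ∧ g w = y) :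
    (∀ s : X → R, Tfer g (Rfer f s) = Rfer k (Tfer h s)) ∧
    (∀ s : X → R, Nfer g (Rfer f s) = Rfer k (Nfer h s)) := by
  have he : ∀ y w, (fiberEquivOfPullback f g h k hcomm hpb y w : X) = f w := fun _ _ => rfl
  exact ⟨Tfer_Rfer_eq_Rfer_Tfer_of_fiberEquiv f g h k _ he,
    Nfer_Rfer_eq_Rfer_Nfer_of_fiberEquiv f g h k _ he⟩

/-- The Mackey (base-change) property: for a cartesian square
`W → X, W → Y, X → Z, Y → Z` one has `T_g ∘ R_f = R_k ∘ T_h` and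
`N_g ∘ R_f = R_k ∘ N_h`. -/
theorem mackey_base_change {W X Y Z R : Type*} [Fintype W] [Fintype X] [Fintype Y]
    [Fintype Z] [CommSemiring R]
    (f : W → X) (g : W → Y) (h : X → Z) (k : Y → Z)
    (hcomm : ∀ w : W, k (g w) = h (f w))
    (hpb : ∀ (x : X) (y : Y), h x = k y → ∃! w : W, f w = x ∧ g w = y) :
    (∀ s : X → R, Tfer g (Rfer f s) = Rfer k (Tfer h s)) ∧
    (∀ s : X → R, Nfer g (Rfer f s) = Rfer k (Nfer h s)) :=
  mackey_base_change_general f g h k hcomm hpb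
end

section
/- Let g : X → Y and h : Y → Z be maps of finite sets. Define B = {(z,s) : z ∈ Z, s : h⁻¹{z} → X with g∘s = id}, A = {(y,s) : y ∈ Y, s : h⁻¹{h(y)} → X with g∘s = id}, and maps p : A → X, p(y,s) = s(y); q : A → B, q(y,s) = (h(y), s); r : B → Z, r(z,s) = z. Then for any commutative semiring R, N_h ∘ T_g = T_r ∘ N_q ∘ R_p as maps (X → R) → (Z → R), where T, N, R denote fiberwise sum, fiberwise product, and precomposition respectively. -/
open scoped Classical

/-- `B = {(z,s) : z ∈ Z, s : h⁻¹{z} → X, g ∘ s = id}`. -/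
abbrev DistB {X Y Z : Type*} (g : X → Y) (h : Y → Z) : Type _ :=
  Σ z : Z, {s : {y : Y // h y = z} → X // ∀ y, g (s y) = y.1}

/-- `A = {(y,s) : y ∈ Y, s : h⁻¹{h(y)} → X, g ∘ s = id}`. -/
abbrev DistA {X Y Z : Type*} (g : X → Y) (h : Y → Z) : Type _ :=
  Σ y : Y, {s : {y' : Y // h y' = h y} → X // ∀ y', g (s y') = y'.1}

/-- `p(y,s) = s(y)`. -/
def distP {X Y Z : Type*} (g : X → Y) (h : Y → Z) (a : DistA g h) : X :=
  a.2.1 ⟨a.1, rfl⟩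

/-- `q(y,s) = (h(y), s)`. -/
def distQ {X Y Z : Type*} (g : X → Y) (h : Y → Z) (a : DistA g h) : DistB g h :=
  ⟨h a.1, a.2⟩

/-- `r(z,s) = z`. -/
def distR {X Y Z : Type*} (g : X → Y) (h : Y → Z) (b : DistB g h) : Z := b.1

noncomputable instance {X Y Z : Type*} [Fintype X] [Fintype Y] [Fintype Z]
    (g : X → Y) (h : Y → Z) : Fintype (DistA g h) :=
  Fintype.ofFinite _

noncomputable instance {X Y Z : Type*} [Fintype X] [Fintype Y] [Fintype Z]
    (g : X → Y) (h : Y → Z) : Fintype (DistB g h) :=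
  Fintype.ofFinite _

theorem Fintype.prod_sum_fiber_eq_sum_sections {ι X Y R : Type*} [Fintype ι] [DecidableEq ι]
    [Fintype X] [CommSemiring R] (g : X → Y) (e : ι → Y) (s : X → R) :
    ∏ i, ∑ x : {x // g x = e i}, s x =
      ∑ σ : {σ : ι → X // ∀ i, g (σ i) = e i}, ∏ i, s (σ.1 i) := by
  rw [Fintype.prod_sum]
  exact (Fintype.sum_equiv Equiv.subtypePiEquivPi _ _ fun _ => rfl).symm

def Sigma.pullbackFiberEquiv {Y Z : Type*} {S : Z → Type*} (h : Y → Z) (z : Z) (σ : S z) :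
    {y // h y = z} ≃ {a : Σ y, S (h y) // (⟨h a.1, a.2⟩ : Σ z, S z) = ⟨z, σ⟩} where
  toFun y := ⟨⟨y.1, cast (congrArg S y.2.symm) σ⟩, by obtain ⟨y, rfl⟩ := y; rfl⟩
  invFun a := ⟨a.1.1, congrArg Sigma.fst a.2⟩
  left_inv _ := rfl
  right_inv := by
    rintro ⟨⟨y, τ⟩, ha⟩
    obtain ⟨rfl, hτ⟩ := Sigma.mk.inj_iff.mp ha
    cases hτ
    rfl

theorem Tfer_sigma_fst {Z R : Type*} {S : Z → Type*} [Fintype (Σ z, S z)] [∀ z, Fintype (S z)]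
    [CommSemiring R] (t : (Σ z, S z) → R) (z : Z) :
    Tfer Sigma.fst t z = ∑ σ : S z, t ⟨z, σ⟩ := by
  rw [Tfer_apply_eq_sum_fiber]
  exact Fintype.sum_equiv (Equiv.sigmaSubtype z) _ _ (by rintro ⟨⟨_, σ⟩, h⟩; cases h; rfl)

section Distributor

variable {X Y Z R : Type*} [Fintype X] [Fintype Y] [Fintype Z] [CommSemiring R]

abbrev FiberSections (g : X → Y) (h : Y → Z) (z : Z) : Type _ :=
  {σ : {y // h y = z} → X // ∀ y, g (σ y) = y.1}

theorem Nfer_distQ_Rfer_distP_apply (g : X → Y) (h : Y → Z) (s : X → R) (z : Z)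
    (σ : FiberSections g h z) :
    Nfer (distQ g h) (Rfer (distP g h) s) ⟨z, σ⟩ = ∏ y : {y // h y = z}, s (σ.1 y) := by
  rw [Nfer_apply_eq_prod_fiber]
  symm
  refine Finset.prod_equiv (Sigma.pullbackFiberEquiv (S := FiberSections g h) h z σ) (by simp) ?_
  rintro ⟨y, rfl⟩ -
  rfl

end Distributor

/-- The distributor identity: `N_h ∘ T_g = T_r ∘ N_q ∘ R_p`. -/
theorem distributor_identity {X Y Z R : Type*} [Fintype X] [Fintype Y] [Fintype Z]
    [CommSemiring R] (g : X → Y) (h : Y → Z) :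
    ∀ s : X → R,
      Nfer h (Tfer g s) =
        Tfer (distR g h) (Nfer (distQ g h) (Rfer (distP g h) s)) := by
  intro s
  funext z
  calc Nfer h (Tfer g s) z = ∏ y : {y // h y = z}, ∑ x : {x // g x = y}, s x := by
        simp only [Nfer_apply_eq_prod_fiber, Tfer_apply_eq_sum_fiber]
    _ = ∑ σ : FiberSections g h z, ∏ y, s (σ.1 y) :=
        Fintype.prod_sum_fiber_eq_sum_sections g Subtype.val s
    _ = ∑ σ : FiberSections g h z, Nfer (distQ g h) (Rfer (distP g h) s) ⟨z, σ⟩ := by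
        simp only [Nfer_distQ_Rfer_distP_apply]
    _ = Tfer (distR g h) (Nfer (distQ g h) (Rfer (distP g h) s)) z :=
        (Tfer_sigma_fst (S := FiberSections g h) _ z).symm
end

section
/- Let A = ℤ[α]/(α²) and B = ℤ[β,γ]/(β², βγ, γ², 2γ), with maps res(i + jβ + kγ) = i + 2jα, trc(i + jα) = 2i + jβ, nrm(i + jα) = i² + ijβ + j²γ, and trivial involution on A. Then these data satisfy the Tambara pair axioms: trc is additive, nrm is multiplicative, res is a ring homomorphism, res(trc(a)) = a + ā, res(nrm(a)) = a·ā, nrm(a₀ + a₁) = nrm(a₀) + nrm(a₁) + trc(a₀·ā₁), and trc(a·res(b)) = trc(a)·b. -/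
/-! The first two coordinates of every axiom are polynomial identities over `ℤ`. The only
subtle coordinate is the `γ`-part of `nrm`, namely `j ↦ j² mod 2`: it is additive and
multiplicative because squaring is the Frobenius of `ZMod 2`, so the cross terms `2 j j'`
that would break these identities vanish. -/

/-- `A = ℤ[α]/(α²)`, represented as pairs `(i, j) = i + jα`. -/
abbrev TPA : Type := ℤ × ℤ

/-- `B = ℤ[β,γ]/(β², βγ, γ², 2γ)`, represented as triples `(i, j, k) = i + jβ + kγ`. -/
abbrev TPB : Type := ℤ × ℤ × ZMod 2

/-- Multiplication on `A = ℤ[α]/(α²)`. -/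
def mulA (a b : TPA) : TPA := (a.1 * b.1, a.1 * b.2 + a.2 * b.1)

/-- Multiplication on `B = ℤ[β,γ]/(β², βγ, γ², 2γ)`. -/
def mulB (a b : TPB) : TPB :=
  (a.1 * b.1, a.1 * b.2.1 + a.2.1 * b.1, a.1 * b.2.2 + a.2.2 * b.1)

/-- `res(i + jβ + kγ) = i + 2jα`. -/
def res9 (b : TPB) : TPA := (b.1, 2 * b.2.1)

/-- `trc(i + jα) = 2i + jβ`. -/
def trc9 (a : TPA) : TPB := (2 * a.1, a.2, 0)

/-- `nrm(i + jα) = i² + ijβ + j²γ`. -/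
def nrm9 (a : TPA) : TPB := (a.1 ^ 2, a.1 * a.2, ((a.2 : ZMod 2)) ^ 2)

theorem trc9_zero : trc9 0 = 0 := by
  simp [trc9]

theorem trc9_add (a b : TPA) : trc9 (a + b) = trc9 a + trc9 b := by
  simp [trc9, mul_add]

theorem nrm9_one : nrm9 (1, 0) = (1, 0, 0) := by
  simp [nrm9]

theorem nrm9_mulA (a b : TPA) : nrm9 (mulA a b) = mulB (nrm9 a) (nrm9 b) := by
  simp only [nrm9, mulA, mulB, Prod.ext_iff]
  refine ⟨by ring, by ring, ?_⟩
  push_cast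
  rw [CharTwo.add_sq]
  ring

theorem res9_one : res9 (1, 0, 0) = (1, 0) := by
  simp [res9]

theorem res9_zero : res9 0 = 0 := by
  simp [res9]

theorem res9_add (a b : TPB) : res9 (a + b) = res9 a + res9 b := by
  simp [res9, mul_add]

theorem res9_mulB (a b : TPB) : res9 (mulB a b) = mulA (res9 a) (res9 b) := by
  simp only [res9, mulA, mulB, Prod.mk.injEq, true_and]
  ring

theorem res9_trc9 (a : TPA) : res9 (trc9 a) = a + a := by
  simp [res9, trc9, Prod.ext_iff, two_mul]

theorem res9_nrm9 (a : TPA) : res9 (nrm9 a) = mulA a a := by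
  simp only [res9, nrm9, mulA, Prod.ext_iff]
  constructor <;> ring

theorem nrm9_add (a b : TPA) : nrm9 (a + b) = nrm9 a + nrm9 b + trc9 (mulA a b) := by
  simp only [nrm9, trc9, mulA, Prod.fst_add, Prod.snd_add, Prod.ext_iff]
  refine ⟨by ring, by ring, ?_⟩
  push_cast
  rw [CharTwo.add_sq, add_zero]

theorem trc9_mulA_res9 (a : TPA) (b : TPB) : trc9 (mulA a (res9 b)) = mulB (trc9 a) b := by
  simp only [trc9, mulA, res9, mulB, Prod.ext_iff]
  refine ⟨by ring, by ring, ?_⟩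
  simp [CharTwo.two_eq_zero]

/-- The data `(A, B, res, trc, nrm)` with trivial involution on `A` satisfies the
Tambara pair axioms for the group of order two. -/
theorem tambara_pair_example :
    -- trc is additive
    (trc9 0 = 0) ∧ (∀ a b : TPA, trc9 (a + b) = trc9 a + trc9 b) ∧
    -- nrm is multiplicative
    (nrm9 (1, 0) = (1, 0, 0)) ∧ (∀ a b : TPA, nrm9 (mulA a b) = mulB (nrm9 a) (nrm9 b)) ∧
    -- res is a ring homomorphism
    (res9 (1, 0, 0) = (1, 0)) ∧ (res9 0 = 0) ∧
    (∀ a b : TPB, res9 (a + b) = res9 a + res9 b) ∧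
    (∀ a b : TPB, res9 (mulB a b) = mulA (res9 a) (res9 b)) ∧
    -- res(trc(a)) = a + ā  (the involution on A is trivial)
    (∀ a : TPA, res9 (trc9 a) = a + a) ∧
    -- res(nrm(a)) = a·ā
    (∀ a : TPA, res9 (nrm9 a) = mulA a a) ∧
    -- nrm(a₀ + a₁) = nrm(a₀) + nrm(a₁) + trc(a₀·ā₁)
    (∀ a b : TPA, nrm9 (a + b) = nrm9 a + nrm9 b + trc9 (mulA a b)) ∧
    -- trc(a·res(b)) = trc(a)·b
    (∀ (a : TPA) (b : TPB), trc9 (mulA a (res9 b)) = mulB (trc9 a) b) :=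
  ⟨trc9_zero, trc9_add, nrm9_one, nrm9_mulA, res9_one, res9_zero, res9_add, res9_mulB,
    res9_trc9, res9_nrm9, nrm9_add, trc9_mulA_res9⟩
end

section
/- Let A and B be abelian groups and M the set of all functions A → B. For a ∈ A define δ[a] : M → M by (δ[a]f)(x) = f(a+x) − f(x). If f : A → B is polynomial of degree at most n and g : B → C is polynomial of degree at most m (where C is another abelian group), then g ∘ f : A → C is polynomial of degree at most nm. -/
/-- `f : A → B` is polynomial of degree at most `n` if for every finite index set `I`
with `|I| > n`, every `a : I → A` and every `x ∈ A`,
`∑_{J ⊆ I} (−1)^{|I∖J|} f(∑_{j∈J} a(j) + x) = 0`. -/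
def IsPolyDeg {A B : Type*} [AddCommGroup A] [AddCommGroup B] (f : A → B) (n : ℕ) : Prop :=
  ∀ k : ℕ, n < k → ∀ (a : Fin k → A) (x : A),
    ∑ J : Finset (Fin k), ((-1 : ℤ) ^ (k - J.card)) • f ((∑ j ∈ J, a j) + x) = 0

/-!
Write `Δ_h (g ∘ f) x = (Δ_{Δ_h f x} g) (f x)`. More generally, for functions `u₁, …, u_r` of
degrees `e_i ≤ n`, the map `x ↦ (Δ_{u₁ x} ⋯ Δ_{u_r x} g) (f x)` has degree at most
`(m - r) n + ∑ e_i`. Indeed, differencing it in `x` either adds the slot `Δ_h f`, of degree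
`n - 1`, or, through `Δ_{u + w} G y = Δ_u G y + Δ_w G (y + u)`, replaces some `u_i` by `Δ_h u_i`;
either way the weight drops by one, and a slot beyond the `m`-th kills everything because `g`
has degree `m`. Induction on the weight, started with `r = 0`, gives the degree `nm` of `g ∘ f`.
-/

open Finset fwdDiff

section

variable {A B C : Type*} [AddCommMonoid A] [AddCommGroup B] [AddCommGroup C]

lemma fwdDiff_zero (h : A) : Δ_[h] (0 : A → B) = 0 :=
  funext fun _ => sub_self _

lemma comp_add_right_eq_add_fwdDiff (f : A → B) (h : A) : f ∘ (· + h) = f + Δ_[h] f := by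
  funext x
  simp [fwdDiff]

def DegLT : ℕ → (A → B) → Prop
  | 0, f => f = 0
  | k + 1, f => ∀ h, DegLT k (Δ_[h] f)

namespace DegLT

lemma zero_fun : ∀ {k : ℕ}, DegLT k (0 : A → B)
  | 0 => rfl
  | _ + 1 => fun h => by rw [fwdDiff_zero]; exact zero_fun

lemma add {k : ℕ} {f g : A → B} (hf : DegLT k f) (hg : DegLT k g) : DegLT k (f + g) := by
  induction k generalizing f g with
  | zero => rw [show f = 0 from hf, show g = 0 from hg, add_zero]; rfl
  | succ k ih => exact fun h => by rw [fwdDiff_add]; exact ih (hf h) (hg h)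

lemma succ {k : ℕ} {f : A → B} (hf : DegLT k f) : DegLT (k + 1) f := by
  induction k generalizing f with
  | zero => exact fun h => by rw [show f = 0 from hf, fwdDiff_zero]; rfl
  | succ k ih => exact fun h => ih (hf h)

lemma mono {k l : ℕ} {f : A → B} (hf : DegLT k f) (hkl : k ≤ l) : DegLT l f := by
  induction hkl with
  | refl => exact hf
  | step _ ih => exact ih.succ

lemma comp_add_right {k : ℕ} {f : A → B} (hf : DegLT k f) (h : A) : DegLT k (f ∘ (· + h)) := by
  rw [comp_add_right_eq_add_fwdDiff]
  exact hf.add (hf.succ h)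

lemma foldr_fwdDiff {k : ℕ} {g : B → C} (hs : List B) (hg : DegLT (hs.length + k) g) :
    DegLT k (hs.foldr fwdDiff g) := by
  induction hs generalizing k with
  | nil => simpa using hg
  | cons h hs ih =>
    exact ih (k := k + 1) (by simpa [Nat.add_right_comm, Nat.add_assoc] using hg) h

end DegLT

section AltSum

variable {ι : Type*}

def altSum (I : Finset ι) (a : ι → A) (f : A → B) (x : A) : B :=
  ∑ J ∈ I.powerset, (-1 : ℤ) ^ (#I - #J) • f (∑ j ∈ J, a j + x)

lemma altSum_empty (a : ι → A) (f : A → B) (x : A) : altSum ∅ a f x = f x := by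
  simp [altSum]

lemma altSum_congr {I : Finset ι} {a a' : ι → A} (h : ∀ i ∈ I, a i = a' i) (f : A → B) (x : A) :
    altSum I a f x = altSum I a' f x :=
  sum_congr rfl fun J hJ => by rw [sum_congr rfl fun j hj => h j (mem_powerset.1 hJ hj)]

lemma altSum_insert [DecidableEq ι] {I : Finset ι} {i : ι} (hi : i ∉ I) (a : ι → A) (f : A → B)
    (x : A) :
    altSum (insert i I) a f x = altSum I a (Δ_[a i] f) x := by
  rw [altSum, altSum, sum_powerset_insert hi, card_insert_of_notMem hi, ← sum_add_distrib]
  refine sum_congr rfl fun J hJ => ?_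
  have hJI : J ⊆ I := mem_powerset.1 hJ
  have hiJ : i ∉ J := fun h => hi (hJI h)
  rw [card_insert_of_notMem hiJ, sum_insert hiJ, Nat.add_sub_add_right,
    Nat.sub_add_comm (card_le_card hJI), pow_succ, mul_neg_one, neg_smul, fwdDiff, smul_sub,
    add_comm (a i), add_right_comm _ (a i)]
  abel

lemma degLT_card_iff [DecidableEq ι] {I : Finset ι} {f : A → B} :
    DegLT #I f ↔ ∀ a x, altSum I a f x = 0 := by
  induction I using Finset.induction_on generalizing f with
  | empty =>
    simp only [card_empty, altSum_empty]
    exact ⟨fun hf _ x => congrFun hf x, fun hf => funext (hf 0)⟩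
  | insert i I hi ih =>
    rw [card_insert_of_notMem hi]
    refine ⟨fun hf a x => ?_, fun hf h => ih.2 fun a x => ?_⟩
    · rw [altSum_insert hi]
      exact ih.1 (hf (a i)) a x
    · have := hf (Function.update a i h) x
      rwa [altSum_insert hi, Function.update_self,
        altSum_congr fun j hj => Function.update_of_ne (ne_of_mem_of_not_mem hj hi) ..] at this

end AltSum

section MultiDiff

variable {X : Type*} (g : B → C)

def multiDiff (us : List (X → B)) (f : X → B) (x : X) : C :=
  (us.map (· x)).foldr fwdDiff g (f x)

lemma multiDiff_nil (f : X → B) : multiDiff g [] f = g ∘ f := rfl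

lemma multiDiff_cons (u : X → B) (us : List (X → B)) (f : X → B) :
    multiDiff g (u :: us) f = multiDiff g us (f + u) - multiDiff g us f := rfl

lemma multiDiff_eq_zero {us : List (X → B)} (hg : DegLT us.length g) (f : X → B) :
    multiDiff g us f = 0 :=
  funext fun x => congrFun (DegLT.foldr_fwdDiff (k := 0) _ (by simpa using hg)) (f x)

lemma multiDiff_append_add_cons (pre : List (X → B)) (u w : X → B) (suf : List (X → B))
    (f : X → B) :
    multiDiff g (pre ++ (u + w) :: suf) f
      = multiDiff g (pre ++ u :: suf) f + multiDiff g (pre ++ w :: suf) (f + u) := by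
  induction pre generalizing f with
  | nil =>
    simp only [List.nil_append, multiDiff_cons, ← add_assoc]
    abel
  | cons v pre ih =>
    simp only [List.cons_append, multiDiff_cons, ih, add_right_comm f u v]
    abel

lemma multiDiff_append_zero_cons (pre suf : List (X → B)) (f : X → B) :
    multiDiff g (pre ++ 0 :: suf) f = 0 := by
  simpa using multiDiff_append_add_cons g pre 0 0 suf f

lemma multiDiff_comp_add_right (us : List (A → B)) (f : A → B) (h : A) :
    multiDiff g us f ∘ (· + h) = multiDiff g (us.map (· ∘ (· + h))) (f ∘ (· + h)) := by
  funext x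
  simp [multiDiff, Function.comp_def]

lemma fwdDiff_multiDiff (us : List (A → B)) (f : A → B) (h : A) :
    Δ_[h] (multiDiff g us f)
      = (multiDiff g (us.map (· ∘ (· + h))) (f ∘ (· + h)) - multiDiff g us (f ∘ (· + h)))
        + multiDiff g (Δ_[h] f :: us) f := by
  rw [multiDiff_cons, ← comp_add_right_eq_add_fwdDiff, ← multiDiff_comp_add_right]
  funext x
  simp [fwdDiff]

end MultiDiff

variable (A) in
/-- `k` counts the differences of `g` still available; `e ∈ es` bounds the degree of the
corresponding `u ∈ us`, so that `k * n + es.sum` is the weight of `multiDiff g us f`. -/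
def MultiDiffBound (g : B → C) (m n D : ℕ) : Prop :=
  ∀ (f : A → B) (us : List (A → B)) (es : List ℕ) (k : ℕ), DegLT (n + 1) f →
    List.Forall₂ (fun u e => DegLT (e + 1) u ∧ e ≤ n) us es → us.length + k = m →
    k * n + es.sum < D → DegLT D (multiDiff g us f)

namespace MultiDiffBound

variable {g : B → C} {m n D : ℕ}

lemma degLT_multiDiff_shift_sub (ih : MultiDiffBound A g m n D) {F : A → B}
    (hF : DegLT (n + 1) F) (h : A) {suf : List (A → B)} {ess : List ℕ}
    (hsuf : List.Forall₂ (fun u e => DegLT (e + 1) u ∧ e ≤ n) suf ess) :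
    ∀ (pre : List (A → B)) (esp : List ℕ) (k : ℕ),
      List.Forall₂ (fun u e => DegLT (e + 1) u ∧ e ≤ n) pre esp →
      pre.length + suf.length + k = m → k * n + esp.sum + ess.sum < D + 1 →
      DegLT D (multiDiff g (pre ++ suf.map (· ∘ (· + h))) F - multiDiff g (pre ++ suf) F) := by
  induction hsuf with
  | nil => intro _ _ _ _ _ _; rw [List.map_nil, sub_self]; exact DegLT.zero_fun
  | @cons u e suf ess hu hsuf ih_suf =>
    intro pre esp k hpre hlen hD
    rw [List.map_cons, comp_add_right_eq_add_fwdDiff, multiDiff_append_add_cons,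
      add_sub_right_comm]
    refine DegLT.add ?_ ?_
    · rw [List.append_cons pre u (suf.map _), List.append_cons pre u suf]
      exact ih_suf (pre ++ [u]) (esp ++ [e]) k (List.rel_append hpre (.cons hu .nil))
        (by simp at hlen ⊢; omega) (by simp at hD ⊢; omega)
    · rcases e with _ | e
      · rw [show Δ_[h] u = 0 from hu.1 h, multiDiff_append_zero_cons]
        exact DegLT.zero_fun
      · refine ih (F + u) _ (esp ++ e :: ess) k (hF.add (hu.1.mono (by omega)))
          (List.rel_append hpre (.cons ⟨hu.1 h, by omega⟩ ?_)) (by simp at hlen ⊢; omega)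
          (by simp at hD ⊢; omega)
        exact List.forall₂_map_left_iff.2 (hsuf.imp fun _ _ hv => ⟨hv.1.comp_add_right h, hv.2⟩)

lemma succ (hg : DegLT (m + 1) g) (ih : MultiDiffBound A g m n D) :
    MultiDiffBound A g m n (D + 1) := by
  intro f us es k hf hus hk hD h
  rw [fwdDiff_multiDiff]
  refine DegLT.add ?_ ?_
  · simpa using ih.degLT_multiDiff_shift_sub (hf.comp_add_right h) h hus [] [] k .nil
      (by simpa using hk) (by simpa using hD)
  rcases n with _ | n
  · rw [show Δ_[h] f = 0 from hf h, ← List.nil_append (0 :: us), multiDiff_append_zero_cons]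
    exact DegLT.zero_fun
  rcases k with _ | k
  · rw [multiDiff_eq_zero g (by simpa [← hk] using hg)]
    exact DegLT.zero_fun
  · rw [Nat.succ_mul] at hD
    exact ih f _ (n :: es) k hf (.cons ⟨hf h, n.le_succ⟩ hus) (by simp; omega) (by simp; omega)

end MultiDiffBound

lemma multiDiffBound {g : B → C} {m : ℕ} (hg : DegLT (m + 1) g) (n : ℕ) :
    ∀ D, MultiDiffBound A g m n D
  | 0 => fun _ _ _ _ _ _ _ hD => absurd hD (Nat.not_lt_zero _)
  | D + 1 => (multiDiffBound hg n D).succ hg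

theorem DegLT.comp {g : B → C} {f : A → B} {m n : ℕ} (hg : DegLT (m + 1) g)
    (hf : DegLT (n + 1) f) : DegLT (n * m + 1) (g ∘ f) := by
  rw [← multiDiff_nil]
  exact multiDiffBound hg n _ f [] [] m hf .nil (by simp) (by simp [Nat.mul_comm])

end

lemma isPolyDeg_iff_degLT {A B : Type*} [AddCommGroup A] [AddCommGroup B] {f : A → B} {n : ℕ} :
    IsPolyDeg f n ↔ DegLT (n + 1) f := by
  have key : ∀ k, (∀ (a : Fin k → A) x,
      ∑ J : Finset (Fin k), (-1 : ℤ) ^ (k - #J) • f (∑ j ∈ J, a j + x) = 0) ↔ DegLT k f := by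
    intro k
    simpa [altSum, ← powerset_univ] using (degLT_card_iff (I := (univ : Finset (Fin k)))).symm
  exact ⟨fun hf => (key _).1 (hf _ n.lt_succ_self), fun hf k hk => (key k).2 (hf.mono hk)⟩

/-- Composition of polynomial maps: if `f` has degree at most `n` and `g` degree at
most `m`, then `g ∘ f` has degree at most `nm`. -/
theorem isPolyDeg_comp {A B C : Type*} [AddCommGroup A] [AddCommGroup B] [AddCommGroup C]
    (f : A → B) (g : B → C) (n m : ℕ)
    (hf : IsPolyDeg f n) (hg : IsPolyDeg g m) :
    IsPolyDeg (g ∘ f) (n * m) :=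
  isPolyDeg_iff_degLT.2 ((isPolyDeg_iff_degLT.1 hg).comp (isPolyDeg_iff_degLT.1 hf))
end

section
/- Let f, g : A → B be polynomial maps between abelian groups, and let A₀ ⊆ A be a submonoid that generates A as a group. If f and g agree on A₀, then f = g on all of A. -/
/-!
Write `x = p - q` with `p, q ∈ A₀`. The difference `h = f - g` is polynomial of some degree `n`
and vanishes at `(j + 1) • q + (p - q) = j • q + p ∈ A₀` for every `j`. In the vanishing alternating
sum of order `n + 1` with all increments equal to `q` and base point `x`, every term except the
one of the empty index set is such a value, so the remaining term `± h x` vanishes too.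
-/

theorem AddSubmonoid.exists_sub_eq_of_mem_closure {A : Type*} [AddCommGroup A]
    (S : AddSubmonoid A) {x : A} (hx : x ∈ AddSubgroup.closure (S : Set A)) :
    ∃ p ∈ S, ∃ q ∈ S, p - q = x := by
  induction hx using AddSubgroup.closure_induction with
  | mem y hy => exact ⟨y, hy, 0, S.zero_mem, sub_zero y⟩
  | zero => exact ⟨0, S.zero_mem, 0, S.zero_mem, sub_self 0⟩
  | add y z _ _ hy hz =>
    obtain ⟨p₁, hp₁, q₁, hq₁, rfl⟩ := hy
    obtain ⟨p₂, hp₂, q₂, hq₂, rfl⟩ := hz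
    exact ⟨p₁ + p₂, S.add_mem hp₁ hp₂, q₁ + q₂, S.add_mem hq₁ hq₂, add_sub_add_comm p₁ p₂ q₁ q₂⟩
  | neg y _ hy =>
    obtain ⟨p, hp, q, hq, rfl⟩ := hy
    exact ⟨q, hq, p, hp, (neg_sub p q).symm⟩

namespace IsPolyDeg

variable {A B : Type*} [AddCommGroup A] [AddCommGroup B] {f g : A → B} {m n : ℕ}

theorem mono (hf : IsPolyDeg f m) (hmn : m ≤ n) : IsPolyDeg f n :=
  fun k hk => hf k (hmn.trans_lt hk)

theorem sub (hf : IsPolyDeg f n) (hg : IsPolyDeg g n) : IsPolyDeg (f - g) n := by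
  intro k hk a x
  simp only [Pi.sub_apply, smul_sub, Finset.sum_sub_distrib, hf k hk a x, hg k hk a x, sub_zero]

theorem eq_zero_of_forall_succ_nsmul_add (hf : IsPolyDeg f n) {q x : A}
    (hq : ∀ j : ℕ, f ((j + 1) • q + x) = 0) : f x = 0 := by
  have hsum := hf (n + 1) n.lt_succ_self (fun _ => q) x
  rw [Finset.sum_eq_single ∅ ?_ (by simp)] at hsum
  · rcases neg_one_pow_eq_or ℤ (n + 1) with h | h <;> simpa [h] using hsum
  · intro J _ hJ
    obtain ⟨j, hj⟩ := Nat.exists_eq_add_one_of_ne_zero (Finset.card_ne_zero.mpr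
      (Finset.nonempty_iff_ne_empty.mpr hJ))
    rw [Finset.sum_const, hj, hq, smul_zero]

theorem eq_zero_of_eqOn_zero (hf : IsPolyDeg f n) {S : AddSubmonoid A}
    (hS : AddSubgroup.closure (S : Set A) = ⊤) (hfS : ∀ x ∈ S, f x = 0) : f = 0 := by
  funext x
  obtain ⟨p, hp, q, hq, rfl⟩ := S.exists_sub_eq_of_mem_closure (hS ▸ AddSubgroup.mem_top x)
  refine hf.eq_zero_of_forall_succ_nsmul_add (q := q) fun j => hfS _ ?_
  rw [succ_nsmul, add_add_sub_cancel]
  exact S.add_mem (S.nsmul_mem hq j) hp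

end IsPolyDeg

/-- Polynomial maps agreeing on a generating submonoid agree everywhere. -/
theorem polynomial_eq_of_eqOn_generating_submonoid {A B : Type*}
    [AddCommGroup A] [AddCommGroup B] (f g : A → B)
    (hf : ∃ n, IsPolyDeg f n) (hg : ∃ n, IsPolyDeg g n)
    (A₀ : AddSubmonoid A) (hgen : AddSubgroup.closure (A₀ : Set A) = ⊤)
    (hagree : ∀ x ∈ A₀, f x = g x) :
    f = g := by
  obtain ⟨m, hfm⟩ := hf
  obtain ⟨n, hgn⟩ := hg
  have hdiff : IsPolyDeg (f - g) (max m n) :=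
    (hfm.mono (le_max_left m n)).sub (hgn.mono (le_max_right m n))
  exact sub_eq_zero.mp <| hdiff.eq_zero_of_eqOn_zero hgen fun x hx => sub_eq_zero.mpr (hagree x hx)
end

section
/- Let A be a commutative ring (additively complete semiring) with trivial G-action, G a finite group, and let H₁,…,H_r be a list of subgroups of G containing one representative of each conjugacy class, ordered so that |H_i| ≤ |H_j| for i ≤ j. Define the ghost map γ : (Fin r → A) → (Fin r → A) by γ(a)(j) = ∑_i |(G/H_i)^{H_j}| · a(i)^{|H_i|/|H_j|} (the sum being over those i with (G/H_i)^{H_j} nonempty, so the exponents are positive integers). If A is torsion-free as an abelian group, then γ is injective. -/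
/-! The ghost map is triangular: the `(j, i)` coefficient vanishes for `i < j`, while the
diagonal coefficient `|N_G(H_j)/H_j|` is nonzero and carries exponent `1`. Torsion-freeness then
recovers `a j` from `γ(a) j` by downward induction on `j`. -/

open Function

theorem injective_sum_of_triangular {ι A M : Type*} [Fintype ι] [LinearOrder ι]
    [AddCancelCommMonoid M] (f : ι → ι → A → M) (hlower : ∀ k i, i < k → ∀ x, f k i x = 0)
    (hdiag : ∀ k, Injective (f k k)) :
    Injective (fun (a : ι → A) k => ∑ i, f k i (a i)) := by
  classical
  intro a b hab
  funext k
  induction k using WellFoundedGT.induction with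
  | _ k ih =>
  have hk : ∑ i, f k i (a i) = ∑ i, f k i (b i) := congr_fun hab k
  rw [← Finset.add_sum_erase _ _ (Finset.mem_univ k),
    ← Finset.add_sum_erase _ _ (Finset.mem_univ k)] at hk
  have hrest : ∑ i ∈ Finset.univ.erase k, f k i (a i) = ∑ i ∈ Finset.univ.erase k, f k i (b i) := by
    refine Finset.sum_congr rfl fun i hi => ?_
    rcases lt_or_gt_of_ne (Finset.ne_of_mem_erase hi) with hik | hki
    · rw [hlower k i hik, hlower k i hik]
    · rw [ih i hki]
  rw [hrest] at hk
  exact hdiag k (add_right_cancel hk)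

section Subgroup

variable {G : Type*} [Group G]

theorem Subgroup.exists_conj_map_le_of_forall_smul_eq {K L : Subgroup G} (y : G ⧸ K)
    (hy : ∀ g ∈ L, g • y = y) : ∃ c : G, L.map (MulAut.conj c).toMonoidHom ≤ K := by
  obtain ⟨x, rfl⟩ := QuotientGroup.mk_surjective y
  refine ⟨x⁻¹, ?_⟩
  rintro _ ⟨g, hg, rfl⟩
  have hgx := hy g hg
  rw [MulAction.Quotient.smul_mk, QuotientGroup.eq] at hgx
  simpa [MulAut.conj, mul_assoc] using K.inv_mem hgx

theorem Subgroup.nonempty_fixed_self (K : Subgroup G) :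
    Nonempty {y : G ⧸ K // ∀ g ∈ K, g • y = y} := by
  refine ⟨⟨QuotientGroup.mk 1, fun g hg => ?_⟩⟩
  rw [MulAction.Quotient.smul_mk, QuotientGroup.eq]
  simpa using K.inv_mem hg

/-- A fixed coset would conjugate `H k` into `H i`, and being at least as large, onto it. -/
theorem card_fixed_eq_zero_of_lt [Finite G] {r : ℕ} {H : Fin r → Subgroup G}
    (hconj : ∀ i k : Fin r, ∀ c : G, (H k).map (MulAut.conj c).toMonoidHom = H i → i = k)
    (horder : ∀ i j : Fin r, i ≤ j → Nat.card (H i) ≤ Nat.card (H j)) {i k : Fin r}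
    (hik : i < k) : Nat.card {y : G ⧸ H i // ∀ g ∈ H k, g • y = y} = 0 := by
  refine Nat.card_eq_zero.mpr (Or.inl ⟨fun ⟨y, hy⟩ => hik.ne ?_⟩)
  obtain ⟨c, hle⟩ := Subgroup.exists_conj_map_le_of_forall_smul_eq y hy
  refine hconj i k c (Subgroup.eq_of_le_of_card_ge hle ?_)
  rw [Subgroup.card_map_of_injective (MulAut.conj c).injective]
  exact horder i k hik.le

end Subgroup

/-- Injectivity of the ghost map.  Let `H 1, …, H r` be a list of subgroups of the
finite group `G` containing exactly one representative of each conjugacy class,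
ordered with nondecreasing order.  For a torsion-free commutative ring `A`, the map
`γ(a)(j) = ∑ᵢ |(G/Hᵢ)^{Hⱼ}| · a(i)^{|Hᵢ|/|Hⱼ|}` is injective. -/
theorem ghost_map_injective {G : Type*} [Group G] [Fintype G] {A : Type*} [CommRing A]
    (htf : ∀ n : ℕ, n ≠ 0 → Function.Injective (fun a : A => n • a))
    (r : ℕ) (H : Fin r → Subgroup G)
    (hconj : ∀ K : Subgroup G, ∃! i : Fin r,
        ∃ g : G, Subgroup.map (MulAut.conj g).toMonoidHom (H i) = K)
    (horder : ∀ i j : Fin r, i ≤ j → Nat.card (H i) ≤ Nat.card (H j)) :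
    Function.Injective (fun (a : Fin r → A) (j : Fin r) =>
      ∑ i : Fin r,
        (Nat.card {y : G ⧸ H i // ∀ g ∈ H j, g • y = y}) •
          (a i) ^ (Nat.card (H i) / Nat.card (H j))) := by
  have hnonconj : ∀ i k : Fin r, ∀ c : G, (H k).map (MulAut.conj c).toMonoidHom = H i → i = k :=
    fun i k c hc => (hconj (H i)).unique ⟨1, by ext; simp⟩ ⟨c, hc⟩
  refine injective_sum_of_triangular
    (fun j i x => Nat.card {y : G ⧸ H i // ∀ g ∈ H j, g • y = y} •
      x ^ (Nat.card (H i) / Nat.card (H j)))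
    (fun k i hik x => ?_) (fun k => ?_)
  · rw [card_fixed_eq_zero_of_lt hnonconj horder hik, zero_smul]
  · have hdiag : Nat.card {y : G ⧸ H k // ∀ g ∈ H k, g • y = y} ≠ 0 :=
      Nat.card_ne_zero.mpr ⟨(H k).nonempty_fixed_self, inferInstance⟩
    simpa only [Nat.div_self Nat.card_pos, pow_one] using htf _ hdiag
end
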